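/- arXiv:2502.12286 — 5 statements merged into one kernel-verified Lean document; each statement's English description precedes it below -/
import Mathlib

section
/- The formula ⟨⟨C⟩⟩^r□p → ⟨⟨C⟩⟩○⟨⟨C⟩⟩^r□p is not valid over the class of all CGSPs: there exists a CGSP P and a state w such that coalition C has a rational strategy from w guaranteeing p always in the future, yet C has no strategy from w guaranteeing that from every successor C again has a rational strategy guaranteeing p always. -/
universe u v

variable {n : ℕ} {W : Type} {Act : Type}

/-- A concurrent game structure (CGS): transition relations for joint actions,
satisfying collective choice determinism (C1), independence of choices (C2),
and seriality / neverending interaction (C3). -/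
structure CGS (n : ℕ) (W Act : Type) where
  R : (Fin n → Act) → W → W → Prop
  det : ∀ δ w v u, R δ w v → R δ w u → v = u
  indep : ∀ w (δ : Fin n → Act),
    (∀ i, ∃ δ' : Fin n → Act, (∃ v, R δ' w v) ∧ δ' i = δ i) → ∃ v, R δ w v
  serial : ∀ w, ∃ δ v, R δ w v

/-- The union transition relation R = ⋃_δ R_δ. -/
def CGS.Rall (M : CGS n W Act) (w v : W) : Prop := ∃ δ, M.R δ w v

/-- Agent i's choice set at state w. -/
def CGS.choice (M : CGS n W Act) (i : Fin n) (w : W) : Set Act :=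
  {a | ∃ δ : Fin n → Act, (∃ v, M.R δ w v) ∧ δ i = a}

/-- A computation (infinite full path) starting at w. -/
def Comp (M : CGS n W Act) (w : W) : Type :=
  {l : ℕ → W // l 0 = w ∧ ∀ k, M.Rall (l k) (l (k + 1))}

/-- The finite history `[l 0, …, l k]` of an infinite sequence. -/
def hist (l : ℕ → W) (k : ℕ) : List W := List.ofFn (fun j : Fin (k + 1) => l j)

/-- A perfect recall strategy of agent i: maps every finite path to an
available action at its last state. -/
def Strat (M : CGS n W Act) (i : Fin n) : Type :=
  {σ : List W → Act // ∀ (h : List W) (hne : h ≠ []),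
    List.Chain' M.Rall h → σ h ∈ M.choice i (h.getLast hne)}

/-- A collective strategy for coalition C. -/
def CStrat (M : CGS n W Act) (C : Set (Fin n)) : Type :=
  (i : Fin n) → i ∈ C → Strat M i

/-- The set of computations from w generated by collective strategy F of C. -/
def outSet (M : CGS n W Act) (C : Set (Fin n)) (w : W) (F : CStrat M C) :
    Set (Comp M w) :=
  {l | ∀ k, ∃ δ : Fin n → Act,
    (∀ i (hi : i ∈ C), (F i hi).val (hist l.val k) = δ i) ∧
    M.R δ (l.val k) (l.val (k + 1))}

/-- A CGS with preferences: a total preorder over computations starting at w,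
for each agent i and state w. -/
structure CGSP (n : ℕ) (W Act : Type) extends CGS n W Act where
  pref : (i : Fin n) → (w : W) → Comp toCGS w → Comp toCGS w → Prop
  pref_refl : ∀ i w l, pref i w l l
  pref_trans : ∀ i w l1 l2 l3, pref i w l1 l2 → pref i w l2 l3 → pref i w l1 l3
  pref_total : ∀ i w l1 l2, pref i w l1 l2 ∨ pref i w l2 l1

/-- Strict preference: l ≺_{i,w} l'. -/
def CGSP.spref (P : CGSP n W Act) (i : Fin n) (w : W)
    (l l' : Comp P.toCGS w) : Prop :=
  P.pref i w l l' ∧ ¬ P.pref i w l' l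

/-- Combine a strategy of agent i with a collective strategy of the other
agents into a grand-coalition strategy. -/
def combine (M : CGS n W Act) (i : Fin n) (s : Strat M i)
    (t : CStrat M ({i}ᶜ : Set (Fin n))) : CStrat M (Set.univ : Set (Fin n)) :=
  fun j _ =>
    if h : j = i then (by subst h; exact s)
    else t j (by simp only [Set.mem_compl_iff, Set.mem_singleton_iff]; exact h)

/-- Strategy s' dominates strategy s of agent i at w: against every collective
strategy of the remaining agents, the generated computation of s ⊕ t is
strictly below that of s' ⊕ t. -/
def Dominates (P : CGSP n W Act) (i : Fin n) (w : W)
    (s' s : Strat P.toCGS i) : Prop :=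
  ∀ t : CStrat P.toCGS ({i}ᶜ : Set (Fin n)),
    ∀ l ∈ outSet P.toCGS Set.univ w (combine P.toCGS i s t),
    ∀ l' ∈ outSet P.toCGS Set.univ w (combine P.toCGS i s' t),
      P.spref i w l l'

/-- A strategy is dominated at w if some strategy dominates it at w. -/
def Dominated (P : CGSP n W Act) (i : Fin n) (w : W)
    (s : Strat P.toCGS i) : Prop :=
  ∃ s', Dominates P i w s' s

/-- (P,w) ⊨ ⟨⟨C⟩⟩○φ. -/
def CanNext (M : CGS n W Act) (C : Set (Fin n)) (φ : W → Prop) (w : W) : Prop :=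
  ∃ F : CStrat M C, ∀ l ∈ outSet M C w F, φ (l.val 1)

/-- (P,w) ⊨ ⟨⟨C⟩⟩□φ. -/
def CanGlob (M : CGS n W Act) (C : Set (Fin n)) (φ : W → Prop) (w : W) : Prop :=
  ∃ F : CStrat M C, ∀ l ∈ outSet M C w F, ∀ k > 0, φ (l.val k)

/-- (P,w) ⊨ ⟨⟨C⟩⟩^r○φ. -/
def RatCanNext (P : CGSP n W Act) (C : Set (Fin n)) (φ : W → Prop) (w : W) :
    Prop :=
  ∃ F : CStrat P.toCGS C, (∀ i (hi : i ∈ C), ¬ Dominated P i w (F i hi)) ∧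
    ∀ l ∈ outSet P.toCGS C w F, φ (l.val 1)

/-- (P,w) ⊨ ⟨⟨C⟩⟩^r□φ. -/
def RatCanGlob (P : CGSP n W Act) (C : Set (Fin n)) (φ : W → Prop) (w : W) :
    Prop :=
  ∃ F : CStrat P.toCGS C, (∀ i (hi : i ∈ C), ¬ Dominated P i w (F i hi)) ∧
    ∀ l ∈ outSet P.toCGS C w F, ∀ k > 0, φ (l.val k)

/-- Short-sighted preferences: the preference between computations from w
depends only on their states at time 1 (indifference given equal next state). -/
def ShortSighted (P : CGSP n W Act) : Prop :=
  ∀ (i : Fin n) (w : W) (l l' : Comp P.toCGS w), l.val 1 = l'.val 1 →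
    P.pref i w l l' ∧ P.pref i w l' l

/-- Prepend a state to a sequence. -/
def prependFun (w : W) (l : ℕ → W) : ℕ → W
  | 0 => w
  | (k + 1) => l k

/-- Prepend a predecessor state w to a computation from v. -/
def Comp.prepend (M : CGS n W Act) {w v : W} (h : M.Rall w v)
    (l : Comp M v) : Comp M w :=
  ⟨prependFun w l.val, by
    refine ⟨rfl, ?_⟩
    intro k
    cases k with
    | zero =>
        show M.Rall w (l.val 0)
        rw [l.2.1]; exact h
    | succ k => exact l.2.2 k⟩

/-- Stable preferences: preferences do not change over time. -/
def Stable (P : CGSP n W Act) : Prop :=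
  ∀ (i : Fin n) (w v : W) (h : P.toCGS.Rall w v) (l l' : Comp P.toCGS v),
    P.pref i v l' l ↔
      P.pref i w (Comp.prepend P.toCGS h l') (Comp.prepend P.toCGS h l)

/-- Strict preference between successors of w, induced from preferences over
computations. -/
def sPrefSucc (P : CGSP n W Act) (i : Fin n) (w : W) (v u : W) : Prop :=
  ∃ l l' : Comp P.toCGS w, l.val 1 = v ∧ l'.val 1 = u ∧ P.spref i w l l'

/-- Action a of agent i is dominated at w: some available action a' does
strictly better against every joint action of the others (whenever both
combined joint actions are executable at w). -/
def ActionDominated (P : CGSP n W Act) [DecidableEq (Fin n)] (i : Fin n)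
    (w : W) (a : Act) : Prop :=
  ∃ a' ∈ P.toCGS.choice i w, ∀ δ : Fin n → Act, δ i = a →
    ∀ v v', P.toCGS.R δ w v → P.toCGS.R (Function.update δ i a') w v' →
      sPrefSucc P i w v v'

/-!
At `w₀ = 0` the strategy "always play `1`" realises the agent's most preferred computation
(staying in `w₁ = 1` forever), so it is not dominated, and it keeps `p` forever. But every
strategy moves from `w₀` to `w₁`, and there a strategy keeping `p` must play `1` first, so it is
dominated by "always play `0`", which reaches the preferred next state `w₀`.
-/

def CGSP.ofGood (M : CGS n W Act) (good : (w : W) → Comp M w → Prop) : CGSP n W Act where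
  toCGS := M
  pref _ w l l' := good w l → good w l'
  pref_refl _ _ _ := id
  pref_trans _ _ _ _ _ h₁ h₂ := h₂ ∘ h₁
  pref_total _ w l₁ l₂ := by
    by_cases h : good w l₂
    · exact Or.inl fun _ => h
    · exact Or.inr fun h' => absurd h' h

theorem CGSP.ofGood_spref_iff {M : CGS n W Act} {good : (w : W) → Comp M w → Prop}
    {i : Fin n} {w : W} {l l' : Comp M w} :
    (CGSP.ofGood M good).spref i w l l' ↔ ¬ good w l ∧ good w l' := by
  simp only [CGSP.spref, CGSP.ofGood]
  tauto

theorem hist_congr {l l' : ℕ → W} {k : ℕ} (h : ∀ j ≤ k, l j = l' j) : hist l k = hist l' k :=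
  List.ofFn_inj.2 (funext fun j => h j (Nat.lt_succ_iff.1 j.isLt))

theorem combine_apply_self (M : CGS n W Act) (i : Fin n) (s : Strat M i)
    (t : CStrat M ({i}ᶜ : Set (Fin n))) (hi : i ∈ (Set.univ : Set (Fin n))) :
    combine M i s t i hi = s := by
  simp [combine]

instance (M : CGS 1 W Act) : Inhabited (CStrat M ({(0 : Fin 1)}ᶜ : Set (Fin 1))) :=
  ⟨fun i hi => absurd (Subsingleton.elim i 0) hi⟩

def play (f : W → Act → W) (σ : List W → Act) (w : W) : ℕ → W
  | 0 => w
  | k + 1 => f (play f σ w k) (σ (List.ofFn fun j : Fin (k + 1) => play f σ w j))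
  termination_by k => k
  decreasing_by
    · exact Nat.lt_succ_self k
    · exact j.isLt

section Deterministic

variable {f : W → Act → W} {σ : List W → Act} {w : W}

@[simp]
theorem play_zero : play f σ w 0 = w := by
  simp [play]

theorem play_succ (k : ℕ) : play f σ w (k + 1) = f (play f σ w k) (σ (hist (play f σ w) k)) := by
  rw [play, hist]

theorem play_one : play f σ w 1 = f w (σ [w]) := by
  simp [play_succ, hist]

variable {M : CGS 1 W Act}

theorem CGS.eq_of_R (hf : ∀ δ w, M.R δ w (f w (δ 0))) {δ : Fin 1 → Act} {v : W}
    (h : M.R δ w v) : v = f w (δ 0) :=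
  M.det δ w v _ h (hf δ w)

theorem CGS.mem_choice (hf : ∀ δ w, M.R δ w (f w (δ 0))) (i : Fin 1) (a : Act) :
    a ∈ M.choice i w :=
  ⟨fun _ => a, ⟨_, hf _ w⟩, rfl⟩

def Strat.ofFun (hf : ∀ δ w, M.R δ w (f w (δ 0))) {i : Fin 1} (σ : List W → Act) : Strat M i :=
  ⟨σ, fun h hne _ => CGS.mem_choice hf i (σ h) (w := h.getLast hne)⟩

def playComp (hf : ∀ δ w, M.R δ w (f w (δ 0))) (σ : List W → Act) (w : W) : Comp M w :=
  ⟨play f σ w, play_zero, fun k => ⟨fun _ => σ (hist (play f σ w) k), play_succ k ▸ hf _ _⟩⟩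

theorem playComp_mem_outSet (hf : ∀ δ w, M.R δ w (f w (δ 0))) {F : CStrat M Set.univ}
    (hσ : (F 0 trivial).val = σ) : playComp hf σ w ∈ outSet M Set.univ w F := by
  intro k
  refine ⟨fun _ => σ (hist (play f σ w) k), ?_, ?_⟩
  · intro i _
    rw [Subsingleton.elim i 0, hσ]
    rfl
  · show M.R _ (play f _ w k) (play f _ w (k + 1))
    rw [play_succ]
    exact hf _ _

theorem val_eq_play_of_mem_outSet (hf : ∀ δ w, M.R δ w (f w (δ 0)))
    {F : CStrat M Set.univ} (hσ : (F 0 trivial).val = σ) {l : Comp M w}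
    (hl : l ∈ outSet M Set.univ w F) : l.val = play f σ w := by
  have key : ∀ k, ∀ j ≤ k, l.val j = play f σ w j := by
    intro k
    induction k with
    | zero => simpa using l.2.1
    | succ k ih =>
      intro j hj
      rcases Nat.le_succ_iff.1 hj with hj | rfl
      · exact ih j hj
      obtain ⟨δ, hδ, hR⟩ := hl k
      rw [CGS.eq_of_R hf hR, ← hδ 0 trivial, hσ, hist_congr ih, ih k le_rfl, play_succ]
  exact funext fun k => key k k le_rfl

theorem dominates_iff_spref {P : CGSP 1 W Act} (hf : ∀ δ w, P.R δ w (f w (δ 0)))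
    {s' s : Strat P.toCGS 0} :
    Dominates P 0 w s' s ↔ P.spref 0 w (playComp hf s.val w) (playComp hf s'.val w) := by
  have combine_self : ∀ (s : Strat P.toCGS 0) t, (combine P.toCGS 0 s t 0 trivial).val = s.val :=
    fun _ _ => congrArg Subtype.val (combine_apply_self ..)
  have mem_out : ∀ (s : Strat P.toCGS 0) t,
      playComp hf s.val w ∈ outSet P.toCGS Set.univ w (combine P.toCGS 0 s t) :=
    fun s t => playComp_mem_outSet hf (combine_self s t)
  have eq_playComp : ∀ (s : Strat P.toCGS 0) t l,
      l ∈ outSet P.toCGS Set.univ w (combine P.toCGS 0 s t) → l = playComp hf s.val w :=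
    fun s t _ hl => Subtype.ext (val_eq_play_of_mem_outSet hf (combine_self s t) hl)
  refine ⟨fun h => h default _ (mem_out s _) _ (mem_out s' _), fun h t l hl l' hl' => ?_⟩
  rwa [eq_playComp s t l hl, eq_playComp s' t l' hl']

end Deterministic

namespace Countermodel

def nxt (w a : Fin 2) : Fin 2 := if w = 0 then 1 else a

theorem nxt_one (w : Fin 2) : nxt w 1 = 1 := by
  unfold nxt
  split <;> rfl

@[simp]
theorem nxt_zero_left (a : Fin 2) : nxt 0 a = 1 := rfl

@[simp]
theorem nxt_one_left (a : Fin 2) : nxt 1 a = a := rfl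

def M : CGS 1 (Fin 2) (Fin 2) where
  R δ w v := v = nxt w (δ 0)
  det _ _ _ _ hv hu := hv.trans hu.symm
  indep w δ _ := ⟨nxt w (δ 0), rfl⟩
  serial w := ⟨fun _ => 0, nxt w 0, rfl⟩

theorem M_R (δ : Fin 1 → Fin 2) (w : Fin 2) : M.R δ w (nxt w (δ 0)) := rfl

def good : (w : Fin 2) → Comp M w → Prop
  | 0, l => ∀ k > 0, l.val k = 1
  | 1, l => l.val 1 = 0

def P : CGSP 1 (Fin 2) (Fin 2) := CGSP.ofGood M good

theorem play_const_one {w : Fin 2} {k : ℕ} (hk : 0 < k) : play nxt (fun _ => 1) w k = 1 := by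
  obtain ⟨j, rfl⟩ := Nat.exists_eq_add_of_lt hk
  rw [play_succ, nxt_one]

theorem ratCanGlob_zero : RatCanGlob P Set.univ (· = 1) 0 := by
  refine ⟨fun _ _ => Strat.ofFun M_R fun _ => 1, ?_, ?_⟩
  · rintro i _ ⟨s', hs'⟩
    obtain rfl := Subsingleton.elim i 0
    have stays_one : good 0 (playComp M_R (fun _ => 1) 0) := fun _ hk => play_const_one hk
    exact (CGSP.ofGood_spref_iff.1 ((dominates_iff_spref M_R).1 hs')).1 stays_one
  · intro l hl k hk
    rw [val_eq_play_of_mem_outSet M_R rfl hl]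
    exact play_const_one hk

theorem not_ratCanGlob_one : ¬ RatCanGlob P Set.univ (· = 1) 1 := by
  rintro ⟨G, hrat, hglob⟩
  set σ := (G 0 trivial).val
  have first_one : σ [1] = 1 := by
    simpa [playComp, play_one] using hglob _ (playComp_mem_outSet M_R rfl) 1 one_pos
  refine hrat 0 trivial ⟨Strat.ofFun M_R fun _ => 0, (dominates_iff_spref M_R).2 ?_⟩
  refine CGSP.ofGood_spref_iff.2 ⟨?_, ?_⟩
  · show play nxt σ 1 1 ≠ 0
    simp [play_one, first_one]
  · show play nxt (fun _ => 0) 1 1 = 0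
    simp [play_one]

end Countermodel

/-- ⟨⟨C⟩⟩^r□p → ⟨⟨C⟩⟩○⟨⟨C⟩⟩^r□p is not valid: there is a CGSP,
a state, and a formula witnessing its failure. -/
theorem stmt_7 :
    ∃ (P : CGSP 1 (Fin 2) (Fin 2)) (w : Fin 2) (φ : Fin 2 → Prop),
      RatCanGlob P Set.univ φ w ∧
      ¬ CanNext P.toCGS Set.univ (fun v => RatCanGlob P Set.univ φ v) w := by
  refine ⟨Countermodel.P, 0, (· = 1), Countermodel.ratCanGlob_zero, ?_⟩
  rintro ⟨F, hF⟩
  have reaches_one : RatCanGlob Countermodel.P Set.univ (· = 1) 1 := by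
    simpa [playComp, play_one] using hF _ (playComp_mem_outSet Countermodel.M_R rfl)
  exact Countermodel.not_ratCanGlob_one reaches_one
end

section
/- The formula ¬⟨⟨∅⟩⟩^r○¬φ → ⟨⟨AGT⟩⟩^r○φ is not valid over the class of all CGSPs: there exist a CGSP P, a state w, and a formula φ such that it is not the case that the empty coalition can rationally ensure ¬φ next, yet the grand coalition has no rational strategy ensuring φ next. -/
universe u v

variable {n : ℕ} {W : Type} {Act : Type}

/-!
The countermodel has a single agent and states `0`, `1`; state `0` is absorbing, and at state `1`
the agent's action is the next state. The agent strictly prefers computations that move to `0`.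
With `φ` true only at `1`, staying at `1` is a possible computation, so `⟨⟨∅⟩⟩^r○¬φ` fails.
The grand coalition has two options at `1`: moving to `0` falsifies `φ`, and staying is
dominated by always moving, so `⟨⟨AGT⟩⟩^r○φ` fails too.
-/

theorem hist_zero (l : ℕ → W) : hist l 0 = [l 0] := by
  simp [hist]

theorem outSet_empty (M : CGS n W Act) (w : W) (F : CStrat M ∅) :
    outSet M ∅ w F = Set.univ := by
  refine Set.eq_univ_of_forall fun l k => ?_
  obtain ⟨δ, hδ⟩ := l.2.2 k
  exact ⟨δ, fun i hi => absurd hi (Set.notMem_empty i), hδ⟩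

theorem ratCanNext_empty_iff (P : CGSP n W Act) (φ : W → Prop) (w : W) :
    RatCanNext P ∅ φ w ↔ ∀ l : Comp P.toCGS w, φ (l.val 1) := by
  constructor
  · rintro ⟨F, -, hF⟩ l
    exact hF l (by simp only [outSet_empty, Set.mem_univ])
  · intro h
    exact ⟨fun i hi => absurd hi (Set.notMem_empty i),
      fun i hi => absurd hi (Set.notMem_empty i), fun l _ => h l⟩

theorem exists_R_of_mem_outSet {M : CGS n W Act} {C : Set (Fin n)} {w : W} {F : CStrat M C}
    {l : Comp M w} (hl : l ∈ outSet M C w F) :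
    ∃ δ, (∀ i (hi : i ∈ C), (F i hi).val [w] = δ i) ∧ M.R δ w (l.val 1) := by
  obtain ⟨δ, hF, hR⟩ := hl 0
  rw [hist_zero, l.2.1] at hF
  rw [l.2.1] at hR
  exact ⟨δ, hF, hR⟩

namespace SinkGame

def step (w a : Fin 2) : Fin 2 := if w = 0 then 0 else a

def cgsp : CGSP 1 (Fin 2) (Fin 2) where
  R δ w v := v = step w (δ 0)
  det _ _ _ _ hv hu := hv.trans hu.symm
  indep _ _ _ := ⟨_, rfl⟩
  serial _ := ⟨fun _ => 0, _, rfl⟩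
  pref _ _ l l' := l.val 1 = 0 → l'.val 1 = 0
  pref_refl _ _ _ := id
  pref_trans _ _ _ _ _ h₁ h₂ := h₂ ∘ h₁
  pref_total _ _ _ _ := by tauto

theorem mem_choice (i : Fin 1) (w a : Fin 2) : a ∈ cgsp.choice i w :=
  ⟨fun _ => a, ⟨_, rfl⟩, rfl⟩

def constStrat (a : Fin 2) : Strat cgsp.toCGS 0 :=
  ⟨fun _ => a, fun _ _ _ => mem_choice 0 _ a⟩

def stay : Comp cgsp.toCGS 1 :=
  ⟨fun _ => 1, rfl, fun _ => ⟨fun _ => 1, rfl⟩⟩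

def leave : Comp cgsp.toCGS 1 :=
  ⟨fun k => if k = 0 then 1 else 0, rfl, fun k => ⟨fun _ => 0, by cases k <;> rfl⟩⟩

theorem next_eq_of_mem_outSet {F : CStrat cgsp.toCGS Set.univ} {l : Comp cgsp.toCGS 1}
    (hl : l ∈ outSet cgsp.toCGS Set.univ 1 F) : l.val 1 = (F 0 trivial).val [1] := by
  obtain ⟨δ, hF, hR⟩ := exists_R_of_mem_outSet hl
  rw [hF 0 trivial]
  exact hR

theorem leave_mem_outSet {F : CStrat cgsp.toCGS Set.univ} (h : (F 0 trivial).val [1] = 0) :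
    leave ∈ outSet cgsp.toCGS Set.univ 1 F := by
  intro k
  refine ⟨fun _ => (F 0 trivial).val (hist leave.val k), fun i _ => by fin_cases i; rfl, ?_⟩
  cases k with
  | zero =>
    show leave.val 1 = step 1 ((F 0 trivial).val (hist leave.val 0))
    rw [hist_zero]
    exact h.symm
  | succ k => rfl

theorem dominated_of_stay {s : Strat cgsp.toCGS 0} (h : s.val [1] = 1) : Dominated cgsp 0 1 s := by
  refine ⟨constStrat 0, fun t l hl l' hl' => ?_⟩
  have hl₁ : l.val 1 = 1 := (next_eq_of_mem_outSet hl).trans h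
  have hl'₁ : l'.val 1 = 0 := next_eq_of_mem_outSet hl'
  exact ⟨fun _ => hl'₁, fun hpref => absurd (hpref hl'₁) (by rw [hl₁]; decide)⟩

end SinkGame

/-- ¬⟨⟨∅⟩⟩^r○¬φ → ⟨⟨AGT⟩⟩^r○φ is not valid over all CGSPs. -/
theorem stmt_8 :
    ∃ (P : CGSP 1 (Fin 2) (Fin 2)) (w : Fin 2) (φ : Fin 2 → Prop),
      ¬ RatCanNext P ∅ (fun v => ¬ φ v) w ∧
      ¬ RatCanNext P Set.univ φ w := by
  refine ⟨SinkGame.cgsp, 1, fun v => v = 1, ?_, ?_⟩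
  · rw [ratCanNext_empty_iff]
    exact fun h => h SinkGame.stay rfl
  · rintro ⟨F, hrat, hφ⟩
    obtain h | h : (F 0 trivial).val [1] = 0 ∨ (F 0 trivial).val [1] = 1 := by omega
    · exact absurd (hφ _ (SinkGame.leave_mem_outSet h)) (by decide)
    · exact hrat 0 trivial (SinkGame.dominated_of_stay h)
end

section
/- The axiom A-Sup1 (superadditivity under rationality) is valid over all CGSPs: for disjoint coalitions C and C', if (P,w) ⊨ ⟨⟨C⟩⟩^r○φ and (P,w) ⊨ ⟨⟨C'⟩⟩^r○ψ, then (P,w) ⊨ ⟨⟨C∪C'⟩⟩^r○(φ∧ψ). -/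
universe u v

variable {n : ℕ} {W : Type} {Act : Type}

namespace CStrat

variable {M : CGS n W Act} {C C' : Set (Fin n)}

open Classical in
noncomputable def union (F : CStrat M C) (F' : CStrat M C') : CStrat M (C ∪ C') :=
  fun i hi => if h : i ∈ C then F i h else F' i (hi.resolve_left h)

theorem union_apply_of_mem (F : CStrat M C) (F' : CStrat M C') {i : Fin n}
    (hi : i ∈ C ∪ C') (h : i ∈ C) : union F F' i hi = F i h :=
  dif_pos h

theorem union_apply_of_notMem (F : CStrat M C) (F' : CStrat M C') {i : Fin n}
    (hi : i ∈ C ∪ C') (h : i ∉ C) : union F F' i hi = F' i (hi.resolve_left h) :=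
  dif_neg h

end CStrat

section outSet

variable {M : CGS n W Act} {C C' D : Set (Fin n)} {w : W}

theorem outSet_subset_of_agree {G : CStrat M D} {F : CStrat M C} (hCD : C ⊆ D)
    (hGF : ∀ i (hi : i ∈ C), G i (hCD hi) = F i hi) :
    outSet M D w G ⊆ outSet M C w F := by
  intro l hl k
  obtain ⟨δ, hδ, hR⟩ := hl k
  exact ⟨δ, fun i hi => hGF i hi ▸ hδ i (hCD hi), hR⟩

theorem outSet_union_subset_left (F : CStrat M C) (F' : CStrat M C') :
    outSet M (C ∪ C') w (F.union F') ⊆ outSet M C w F :=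
  outSet_subset_of_agree Set.subset_union_left fun _ hi =>
    CStrat.union_apply_of_mem F F' _ hi

theorem outSet_union_subset_right (hd : Disjoint C C')
    (F : CStrat M C) (F' : CStrat M C') :
    outSet M (C ∪ C') w (F.union F') ⊆ outSet M C' w F' :=
  outSet_subset_of_agree Set.subset_union_right fun _ hi =>
    CStrat.union_apply_of_notMem F F' _ (Set.disjoint_right.mp hd hi)

end outSet

/-- A-Sup1: superadditivity under rationality. -/
theorem stmt_12 (P : CGSP n W Act) (C C' : Set (Fin n)) (hd : Disjoint C C')
    (φ ψ : W → Prop) (w : W)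
    (h1 : RatCanNext P C φ w) (h2 : RatCanNext P C' ψ w) :
    RatCanNext P (C ∪ C') (fun v => φ v ∧ ψ v) w := by
  obtain ⟨F, hF, hFφ⟩ := h1
  obtain ⟨F', hF', hF'ψ⟩ := h2
  refine ⟨F.union F', fun i hi => ?_, fun l hl =>
    ⟨hFφ l (outSet_union_subset_left F F' hl), hF'ψ l (outSet_union_subset_right hd F F' hl)⟩⟩
  by_cases h : i ∈ C
  · rw [CStrat.union_apply_of_mem F F' hi h]
    exact hF i h
  · rw [CStrat.union_apply_of_notMem F F' hi h]
    exact hF' i _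
end

section
/- The axiom A-DGRC (determinism of the grand coalition's rational choice) is valid over all CGSPs: if (P,w) ⊨ ⟨⟨AGT⟩⟩^r○(φ∨ψ) then (P,w) ⊨ ⟨⟨AGT⟩⟩^r○φ or (P,w) ⊨ ⟨⟨AGT⟩⟩^r○ψ. -/
universe u v

variable {n : ℕ} {W : Type} {Act : Type}

/- Under a grand-coalition strategy each joint action is a function of the history so far,
and by (C1) it has at most one successor. -/
theorem outSet_univ_subsingleton (M : CGS n W Act) (w : W) (F : CStrat M Set.univ) :
    (outSet M Set.univ w F).Subsingleton := by
  intro l hl l' hl'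
  apply Subtype.ext
  funext k
  induction k using Nat.strong_induction_on with
  | _ k ih =>
    cases k with
    | zero => rw [l.2.1, l'.2.1]
    | succ k =>
      obtain ⟨δ, hδ, hstep⟩ := hl k
      obtain ⟨δ', hδ', hstep'⟩ := hl' k
      have hhist : hist l.val k = hist l'.val k :=
        hist_congr fun j hj => ih j (Nat.lt_succ_of_le hj)
      have hδδ' : δ = δ' := by
        funext i
        rw [← hδ i (Set.mem_univ i), ← hδ' i (Set.mem_univ i), hhist]
      subst hδδ'
      exact M.det δ _ _ _ hstep (ih k (Nat.lt_succ_self k) ▸ hstep')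

theorem Set.Subsingleton.forall_or {α : Type*} {s : Set α} (hs : s.Subsingleton)
    {p q : α → Prop} (h : ∀ x ∈ s, p x ∨ q x) : (∀ x ∈ s, p x) ∨ ∀ x ∈ s, q x := by
  rcases hs.eq_empty_or_singleton with rfl | ⟨x, rfl⟩
  · simp
  · simpa using h x rfl

/-- A-DGRC: determinism of the grand coalition's rational
collective choice. -/
theorem stmt_15 (P : CGSP n W Act) (φ ψ : W → Prop) (w : W)
    (h : RatCanNext P Set.univ (fun v => φ v ∨ ψ v) w) :
    RatCanNext P Set.univ φ w ∨ RatCanNext P Set.univ ψ w := by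
  obtain ⟨F, hrational, hnext⟩ := h
  exact ((outSet_univ_subsingleton P.toCGS w F).forall_or hnext).imp
    (fun hφ => ⟨F, hrational, hφ⟩) (fun hψ => ⟨F, hrational, hψ⟩)
end

section
/- The crown axiom A-Cro is valid over all CGSPs: if (P,w) ⊨ ⟨⟨C⟩⟩○(φ∨ψ) then (P,w) ⊨ ⟨⟨C⟩⟩○φ or (P,w) ⊨ ⟨⟨AGT⟩⟩○ψ. -/
universe u v

variable {n : ℕ} {W : Type} {Act : Type}

/-! Either `φ` holds next on every outcome of the witnessing strategy of `C`, or some outcome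
steps to a `ψ`-state `v` through a joint action `δ`; by determinism the grand coalition forces
`v` by opening with `δ`. -/

namespace CGS

variable (M : CGS n W Act)

theorem choice_nonempty (i : Fin n) (u : W) : (M.choice i u).Nonempty :=
  let ⟨δ, hδ⟩ := M.serial u
  ⟨δ i, δ, hδ, rfl⟩

theorem mem_choice_of_R {δ : Fin n → Act} {w v : W} (h : M.R δ w v) (i : Fin n) :
    δ i ∈ M.choice i w :=
  ⟨δ, ⟨v, h⟩, rfl⟩

end CGS

theorem Comp.rall_zero_one {M : CGS n W Act} {w : W} (l : Comp M w) :
    M.Rall w (l.val 1) := by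
  simpa only [l.2.1] using l.2.2 0

/-- `d` is only read on the empty history, which is not a path. -/
def Strat.memoryless (M : CGS n W Act) (i : Fin n) (f : W → Act)
    (hf : ∀ u, f u ∈ M.choice i u) (d : W) : Strat M i :=
  ⟨fun h => f (h.getLast?.getD d), fun h hne _ => by
    simpa only [List.getLast?_eq_some_getLast hne, Option.getD_some] using hf _⟩

theorem exists_cstrat_univ_eq_at {M : CGS n W Act} {δ : Fin n → Act} {w v : W}
    (h : M.R δ w v) :
    ∃ F : CStrat M Set.univ, ∀ i hi, (F i hi).val [w] = δ i := by
  classical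
  refine ⟨fun i _ => Strat.memoryless M i
    (fun u => if u = w then δ i else (M.choice_nonempty i u).some) ?_ w, fun i _ => ?_⟩
  · intro u
    split_ifs with hu
    · exact hu ▸ M.mem_choice_of_R h i
    · exact (M.choice_nonempty i u).some_mem
  · simp [Strat.memoryless]

theorem outSet_univ_val_one {M : CGS n W Act} {δ : Fin n → Act} {w v : W}
    (h : M.R δ w v) {F : CStrat M Set.univ} (hF : ∀ i hi, (F i hi).val [w] = δ i)
    {l : Comp M w} (hl : l ∈ outSet M Set.univ w F) : l.val 1 = v := by
  obtain ⟨δ', hδ', hstep⟩ := hl 0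
  have : δ' = δ := funext fun i => by
    rw [← hF i trivial, ← hδ' i trivial, hist_zero, l.2.1]
  rw [l.2.1, this] at hstep
  exact M.det δ w _ _ hstep h

theorem canNext_univ_of_rall {M : CGS n W Act} {φ : W → Prop} {w v : W}
    (h : M.Rall w v) (hv : φ v) : CanNext M Set.univ φ w := by
  obtain ⟨δ, hδ⟩ := h
  obtain ⟨F, hF⟩ := exists_cstrat_univ_eq_at hδ
  exact ⟨F, fun l hl => outSet_univ_val_one hδ hF hl ▸ hv⟩

/-- A-Cro, the crown axiom. -/
theorem stmt_16 (M : CGS n W Act) (C : Set (Fin n)) (φ ψ : W → Prop) (w : W)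
    (h : CanNext M C (fun v => φ v ∨ ψ v) w) :
    CanNext M C φ w ∨ CanNext M Set.univ ψ w := by
  obtain ⟨F, hF⟩ := h
  by_cases hφ : ∀ l ∈ outSet M C w F, φ (l.val 1)
  · exact Or.inl ⟨F, hφ⟩
  · push Not at hφ
    obtain ⟨l, hl, hnφ⟩ := hφ
    exact Or.inr (canNext_univ_of_rall l.rall_zero_one ((hF l hl).resolve_left hnφ))
end
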